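/- Let f_{m,r,s}(x) = Σ_{n≥1} c_{n,m,r,s} x^n as a formal power series over the rationals, where c_{n,m,r,s} is the number of 210-avoiding ascent sequences of length n with exactly m ascents, largest letter r, and last letter s (and f with any negative index is 0). Then for m ≥ 1 and 0 ≤ s < r ≤ m, (1−x)²·f_{m,r,s} = x(1−x)·Σ_{i=0}^{s−1} f_{m−1,r,i} + x(1−x)·Σ_{j=s+1}^{r−1} f_{m−1,j,s} + x²·Σ_{i=0}^{s} Σ_{j=i}^{r} f_{m−1,j,i} − x²·Σ_{j=s+1}^{r−1} Σ_{i=0}^{s−1} f_{m−2,j,i}. -/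

import Mathlib

/-- Number of ascents of a sequence of non-negative integers:
indices `j` with `x j < x (j+1)`. -/
def ascents (l : List ℕ) : ℕ :=
  ((l.zip l.tail).filter (fun p => p.1 < p.2)).length

/-- `x` is an ascent sequence: it starts with 0 and each subsequent letter is at most
one more than the number of ascents of the preceding prefix. -/
def IsAscentSeq (x : List ℕ) : Prop :=
  (∀ h : 0 < x.length, x.get ⟨0, h⟩ = 0) ∧
  ∀ i : Fin x.length, 0 < (i : ℕ) → x.get i ≤ ascents (x.take (i : ℕ)) + 1

/-- `p` contains the pattern `t`: `p` has a subsequence order-isomorphic to `t`. -/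
def Contains (p t : List ℕ) : Prop :=
  ∃ f : Fin t.length → Fin p.length, StrictMono f ∧
    ∀ i j : Fin t.length, t.get i < t.get j ↔ p.get (f i) < p.get (f j)

/-- `p` avoids the pattern `t`. -/
def Avoids (p t : List ℕ) : Prop := ¬ Contains p t

/-- `cA n m r s` is the number of 210-avoiding ascent sequences of length `n` with
exactly `m` ascents, largest letter `r`, and last letter `s`. -/
noncomputable def cA (n m r s : ℕ) : ℕ :=
  {x : List ℕ | x.length = n ∧ IsAscentSeq x ∧ Avoids x [2, 1, 0] ∧
    ascents x = m ∧ x.foldr max 0 = r ∧ x.getLast? = some s}.ncard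

/-- `fGF m r s = Σ_{n ≥ 1} cA n m r s * x^n`, the generating function of the numbers
`c_{n,m,r,s}` (note `cA 0 m r s = 0`, as the empty list has no last letter);
any negative index yields `0`. -/
noncomputable def fGF (m r s : ℤ) : PowerSeries ℚ :=
  if 0 ≤ m ∧ 0 ≤ r ∧ 0 ≤ s then
    PowerSeries.mk (fun n => (cA n m.toNat r.toNat s.toNat : ℚ))
  else 0

open PowerSeries

/-!
Remove the last letter `s` of a sequence counted by `c_{n+1,m,r,s}`, where `s < r`. What is
left ends in `s` (no ascent is lost), in some `i < s` (one ascent is lost), or in a letter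
above `s`; in the last case 210-avoidance forbids an inversion whose smaller letter exceeds `s`,
so that letter is the maximum `r`. Sequences ending in their maximum `r` that stay 210-avoiding
when `s` is appended are counted by an auxiliary family `e_{n,m,r,s}`, and removing their last
letter `r` gives a second recursion. For the generating functions this reads
  `(1 - x) f_{m,r,s} = x Σ_{i<s} f_{m-1,r,i} + x e_{m,r,s}`,
  `(1 - x) e_{m,r,s} = x Σ_{i≤s} Σ_{i≤j≤r} f_{m-1,j,i} + x Σ_{s<j<r} e_{m-1,j,s}`,
and eliminating `e_{m,r,s}` and `e_{m-1,j,s}` with the first identity gives the recurrence.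
-/

open List

theorem List.sublist_append_singleton_iff {α : Type*} {l y : List α} {t : α} :
    l <+ y ++ [t] ↔ l <+ y ∨ ∃ l', l = l' ++ [t] ∧ l' <+ y := by
  rw [List.sublist_append_iff]
  constructor
  · rintro ⟨l₁, l₂, rfl, h₁, h₂⟩
    rcases List.sublist_singleton.1 h₂ with rfl | rfl
    · simpa using Or.inl h₁
    · exact Or.inr ⟨l₁, rfl, h₁⟩
  · rintro (h | ⟨l', rfl, h⟩)
    · exact ⟨l, [], by simp, h, by simp⟩
    · exact ⟨l', [t], rfl, h, List.Sublist.refl _⟩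

def Has210 (p : List ℕ) : Prop := ∃ a b c, [a, b, c] <+ p ∧ c < b ∧ b < a

def HasInversionAbove (p : List ℕ) (t : ℕ) : Prop := ∃ a b, [a, b] <+ p ∧ t < b ∧ b < a

theorem contains_210_iff_has210 (p : List ℕ) : Contains p [2, 1, 0] ↔ Has210 p := by
  constructor
  · rintro ⟨f, hf, hiff⟩
    refine ⟨p.get (f ⟨0, by simp⟩), p.get (f ⟨1, by simp⟩), p.get (f ⟨2, by simp⟩), ?_,
      (hiff ⟨2, by simp⟩ ⟨1, by simp⟩).1 (by decide),
      (hiff ⟨1, by simp⟩ ⟨0, by simp⟩).1 (by decide)⟩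
    rw [List.sublist_iff_exists_fin_orderEmbedding_get_eq]
    exact ⟨OrderEmbedding.ofStrictMono f hf, fun i => by fin_cases i <;> rfl⟩
  · rintro ⟨a, b, c, hsub, hcb, hba⟩
    obtain ⟨f, hf⟩ := List.sublist_iff_exists_fin_orderEmbedding_get_eq.1 hsub
    refine ⟨f, f.strictMono, fun i j => ?_⟩
    rw [← hf, ← hf]
    fin_cases i <;> fin_cases j <;> simp <;> omega

theorem has210_append_singleton {y : List ℕ} {t : ℕ} :
    Has210 (y ++ [t]) ↔ Has210 y ∨ HasInversionAbove y t := by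
  simp only [Has210, HasInversionAbove, List.sublist_append_singleton_iff]
  constructor
  · rintro ⟨a, b, c, h | ⟨l', hl', h⟩, hcb, hba⟩
    · exact Or.inl ⟨a, b, c, h, hcb, hba⟩
    · obtain ⟨rfl, rfl⟩ := (List.append_singleton_inj (as := [a, b])).1 hl'
      exact Or.inr ⟨a, b, h, hcb, hba⟩
  · rintro (⟨a, b, c, h, hcb, hba⟩ | ⟨a, b, h, htb, hba⟩)
    · exact ⟨a, b, c, Or.inl h, hcb, hba⟩
    · exact ⟨a, b, t, Or.inr ⟨[a, b], rfl, h⟩, htb, hba⟩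

theorem hasInversionAbove_append_singleton {y : List ℕ} {a t : ℕ} :
    HasInversionAbove (y ++ [a]) t ↔ HasInversionAbove y t ∨ (t < a ∧ ∃ b ∈ y, a < b) := by
  simp only [HasInversionAbove, List.sublist_append_singleton_iff]
  constructor
  · rintro ⟨b, c, h | ⟨l', hl', h⟩, htc, hcb⟩
    · exact Or.inl ⟨b, c, h, htc, hcb⟩
    · obtain ⟨rfl, rfl⟩ := (List.append_singleton_inj (as := [b])).1 hl'
      exact Or.inr ⟨htc, b, List.singleton_sublist.1 h, hcb⟩
  · rintro (⟨b, c, h, htc, hcb⟩ | ⟨hta, b, hb, hab⟩)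
    · exact ⟨b, c, Or.inl h, htc, hcb⟩
    · exact ⟨b, a, Or.inr ⟨[b], rfl, List.singleton_sublist.2 hb⟩, hta, hab⟩

theorem HasInversionAbove.mono {y : List ℕ} {t t' : ℕ} (h : HasInversionAbove y t)
    (ht : t' ≤ t) : HasInversionAbove y t' :=
  let ⟨a, b, hab, htb, hba⟩ := h
  ⟨a, b, hab, by omega, hba⟩

theorem ascents_singleton (a : ℕ) : ascents [a] = 0 := rfl

theorem ascents_cons_cons (a b : ℕ) (l : List ℕ) :
    ascents (a :: b :: l) = (if a < b then 1 else 0) + ascents (b :: l) := by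
  by_cases h : a < b <;> simp [ascents, h, Nat.add_comm]

theorem ascents_append_singleton {z : List ℕ} {b : ℕ} (hz : z.getLast? = some b) (t : ℕ) :
    ascents (z ++ [t]) = ascents z + if b < t then 1 else 0 := by
  obtain ⟨z, rfl⟩ := List.getLast?_eq_some_iff.1 hz
  rw [List.append_assoc, List.singleton_append]
  clear hz
  induction z with
  | nil => simp [ascents_cons_cons, ascents_singleton]
  | cons a z ih =>
    rcases z with _ | ⟨c, z⟩
    · simp [ascents_cons_cons, ascents_singleton]
    · simp only [List.cons_append, ascents_cons_cons] at ih ⊢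
      rw [ih, Nat.add_assoc]

theorem isAscentSeq_append_singleton {z : List ℕ} (hz : z ≠ []) (t : ℕ) :
    IsAscentSeq (z ++ [t]) ↔ IsAscentSeq z ∧ t ≤ ascents z + 1 := by
  have hlen : 0 < z.length := List.length_pos_iff.2 hz
  simp only [IsAscentSeq, Fin.forall_iff, List.get_eq_getElem, List.length_append,
    List.length_singleton, Nat.forall_lt_succ_right']
  simp (disch := omega) only [List.getElem_append_left, List.getElem_concat_length,
    List.take_append_of_le_length, List.take_length]
  simp only [hlen, Nat.zero_lt_succ, forall_const]
  tauto

theorem foldr_max_le_iff {l : List ℕ} {a : ℕ} : l.foldr max 0 ≤ a ↔ ∀ b ∈ l, b ≤ a := by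
  induction l <;> simp [*]

theorem foldr_max_append_singleton (l : List ℕ) (t : ℕ) :
    (l ++ [t]).foldr max 0 = max (l.foldr max 0) t := by
  induction l <;> simp [*, max_assoc]

theorem ncard_preimage_append_singleton {α : Type*} {S : Set (List α)} {a : α}
    (hS : ∀ x ∈ S, x.getLast? = some a) : ((· ++ [a]) ⁻¹' S).ncard = S.ncard :=
  Set.ncard_preimage_of_injective_subset_range (List.append_left_injective [a]) fun x hx =>
    let ⟨y, hy⟩ := List.getLast?_eq_some_iff.1 (hS x hx)
    ⟨y, hy.symm⟩

theorem ncard_biUnion_finset {ι α : Type*} (t : Finset ι) {f : ι → Set α} [∀ i, Finite (f i)]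
    (h : (t : Set ι).PairwiseDisjoint f) : (⋃ i ∈ t, f i).ncard = ∑ i ∈ t, (f i).ncard :=
  (t.finite_toSet.ncard_biUnion (fun i _ => Set.toFinite (f i)) h).trans
    (finsum_mem_coe_finset _ _)

def cSet (n m r s : ℕ) : Set (List ℕ) :=
  {x | x.length = n ∧ IsAscentSeq x ∧ Avoids x [2, 1, 0] ∧ ascents x = m ∧
    x.foldr max 0 = r ∧ x.getLast? = some s}

def eSet (n m r s : ℕ) : Set (List ℕ) :=
  {x | x ∈ cSet n m r r ∧ ¬HasInversionAbove x s}

section cSet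

variable {x z : List ℕ} {n m r s t : ℕ}

theorem mem_cSet : x ∈ cSet n m r s ↔ x.length = n ∧ IsAscentSeq x ∧ ¬Has210 x ∧
    ascents x = m ∧ x.foldr max 0 = r ∧ x.getLast? = some s := by
  simp [cSet, Avoids, contains_210_iff_has210]

theorem le_of_mem_of_mem_cSet (hx : x ∈ cSet n m r s) {b : ℕ} (hb : b ∈ x) : b ≤ r :=
  (mem_cSet.1 hx).2.2.2.2.1 ▸ foldr_max_le_iff.1 le_rfl b hb

theorem last_le_of_mem_cSet (hx : x ∈ cSet n m r s) : s ≤ r :=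
  le_of_mem_of_mem_cSet hx (List.mem_of_getLast? (mem_cSet.1 hx).2.2.2.2.2)

theorem cSet_zero (m r s : ℕ) : cSet 0 m r s = ∅ :=
  Set.eq_empty_of_forall_notMem fun x hx => by
    obtain ⟨hlen, -, -, -, -, hlast⟩ := mem_cSet.1 hx
    simp [List.length_eq_zero_iff.1 hlen] at hlast

instance (n m r s : ℕ) : Finite (cSet n m r s) := by
  refine Set.Finite.to_subtype <|
    ((List.finite_length_eq (Fin (r + 1)) n).image (List.map Fin.val)).subset fun x hx => ?_
  have hlt : ∀ b ∈ x, b < r + 1 := fun b hb => Nat.lt_succ_of_le (le_of_mem_of_mem_cSet hx hb)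
  exact ⟨x.pmap (fun b hb => ⟨b, hb⟩) hlt, by simp [(mem_cSet.1 hx).1], by simp [List.map_pmap]⟩

theorem disjoint_cSet {n' m' r' s' : ℕ} (h : r ≠ r' ∨ s ≠ s') :
    Disjoint (cSet n m r s) (cSet n' m' r' s') :=
  Set.disjoint_left.2 fun x hx hx' => by grind [mem_cSet]

theorem eSet_subset_cSet : eSet n m r s ⊆ cSet n m r r := fun _ hx => hx.1

instance (n m r s : ℕ) : Finite (eSet n m r s) :=
  Finite.Set.subset (cSet n m r r) eSet_subset_cSet

theorem not_hasInversionAbove_of_mem_cSet (hx : x ∈ cSet n m r s) (hst : s ≤ t) :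
    ¬HasInversionAbove x t := by
  obtain ⟨-, -, h210, -, -, hlast⟩ := mem_cSet.1 hx
  obtain ⟨y, rfl⟩ := List.getLast?_eq_some_iff.1 hlast
  rw [hasInversionAbove_append_singleton]
  rintro (h | ⟨hts, -⟩)
  · exact h210 (has210_append_singleton.2 (Or.inr (h.mono hst)))
  · omega

theorem eq_of_mem_cSet_of_not_hasInversionAbove (hx : x ∈ cSet n m r s)
    (hinv : ¬HasInversionAbove x t) (hts : t < s) : r = s := by
  obtain ⟨-, -, -, -, hmax, hlast⟩ := mem_cSet.1 hx
  obtain ⟨y, rfl⟩ := List.getLast?_eq_some_iff.1 hlast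
  have hy : y.foldr max 0 ≤ s := foldr_max_le_iff.2 fun b hb =>
    not_lt.1 fun hsb => hinv (hasInversionAbove_append_singleton.2 (Or.inr ⟨hts, b, hb, hsb⟩))
  rw [← hmax, foldr_max_append_singleton, max_eq_right hy]

theorem not_hasInversionAbove_append_of_mem_cSet {m' r' s' : ℕ} (hz : z ∈ cSet n m' r' s')
    (hr : r' ≤ r) (hinv : ¬HasInversionAbove z s) : ¬HasInversionAbove (z ++ [r]) s := by
  rw [hasInversionAbove_append_singleton]
  rintro (h | ⟨-, b, hb, hrb⟩)
  · exact hinv h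
  · exact absurd (le_of_mem_of_mem_cSet hz hb) (by omega)

theorem append_singleton_mem_cSet_iff {m' r' s' : ℕ} (hz : z ∈ cSet n m' r' s') :
    z ++ [t] ∈ cSet (n + 1) m r s ↔ t = s ∧ t ≤ m' + 1 ∧ ¬HasInversionAbove z t ∧
      m = m' + (if s' < t then 1 else 0) ∧ r = max r' t := by
  obtain ⟨hlen, hasc, h210, rfl, rfl, hlast⟩ := mem_cSet.1 hz
  have hz : z ≠ [] := by rintro rfl; simp at hlast
  rw [mem_cSet, isAscentSeq_append_singleton hz, has210_append_singleton,
    ascents_append_singleton hlast, foldr_max_append_singleton]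
  simp only [List.length_append, List.length_singleton, hlen, List.getLast?_concat,
    Option.some_inj]
  grind

theorem exists_mem_cSet_of_append_singleton_mem (h : z ++ [t] ∈ cSet (n + 1) m r s)
    (hm : m ≠ 0) : ∃ m' r' s', z ∈ cSet n m' r' s' := by
  obtain ⟨hlen, hseq, h210, hasc, -, -⟩ := mem_cSet.1 h
  rcases List.eq_nil_or_concat' z with rfl | ⟨y, b, rfl⟩
  · exact absurd hasc.symm hm
  refine ⟨_, _, b, mem_cSet.2 ⟨by simpa using hlen, ?_, fun h => h210 ?_, rfl, rfl,
    List.getLast?_concat⟩⟩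
  · exact ((isAscentSeq_append_singleton (by simp) t).1 hseq).1
  · exact has210_append_singleton.2 (Or.inl h)

theorem preimage_append_singleton_cSet (hsr : s < r) (hrm : r ≤ m) :
    (· ++ [s]) ⁻¹' cSet (n + 1) m r s =
      cSet n m r s ∪ (⋃ i ∈ Finset.range s, cSet n (m - 1) r i) ∪ eSet n m r s := by
  ext z
  simp only [Set.mem_preimage, Set.mem_union, Set.mem_iUnion, Finset.mem_range, exists_prop]
  constructor
  · intro h
    obtain ⟨m', r', s', hz⟩ := exists_mem_cSet_of_append_singleton_mem h (by omega)
    obtain ⟨-, -, hinv, hm, hr⟩ := (append_singleton_mem_cSet_iff hz).1 h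
    rcases lt_trichotomy s' s with hlt | rfl | hgt
    · rw [if_pos hlt] at hm
      obtain ⟨rfl, rfl⟩ : m - 1 = m' ∧ r = r' := by omega
      exact Or.inl (Or.inr ⟨s', hlt, hz⟩)
    · rw [if_neg (lt_irrefl _)] at hm
      obtain ⟨rfl, rfl⟩ : m = m' ∧ r = r' := by omega
      exact Or.inl (Or.inl hz)
    · rw [if_neg (by omega)] at hm
      obtain rfl := eq_of_mem_cSet_of_not_hasInversionAbove hz hinv hgt
      obtain ⟨rfl, rfl⟩ : m = m' ∧ r = r' := by omega
      exact Or.inr ⟨hz, hinv⟩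
  · rintro ((hz | ⟨i, hi, hz⟩) | ⟨hz, hinv⟩)
    · exact (append_singleton_mem_cSet_iff hz).2 ⟨rfl, by omega,
        not_hasInversionAbove_of_mem_cSet hz le_rfl, by simp, by omega⟩
    · exact (append_singleton_mem_cSet_iff hz).2 ⟨rfl, by omega,
        not_hasInversionAbove_of_mem_cSet hz hi.le, by rw [if_pos hi]; omega, by omega⟩
    · exact (append_singleton_mem_cSet_iff hz).2 ⟨rfl, by omega, hinv,
        by rw [if_neg (by omega), Nat.add_zero], by omega⟩

theorem preimage_append_singleton_eSet (hsr : s < r) (hrm : r ≤ m) :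
    (· ++ [r]) ⁻¹' eSet (n + 1) m r s =
      eSet n m r s ∪ (⋃ i ∈ Finset.range (s + 1), ⋃ j ∈ Finset.Icc i r, cSet n (m - 1) j i) ∪
        ⋃ j ∈ Finset.Ioo s r, eSet n (m - 1) j s := by
  ext z
  simp only [eSet, Set.mem_preimage, Set.mem_union, Set.mem_iUnion, Finset.mem_range,
    Finset.mem_Icc, Finset.mem_Ioo, exists_prop]
  constructor
  · rintro ⟨h, hinv⟩
    obtain ⟨m', r', s', hz⟩ := exists_mem_cSet_of_append_singleton_mem h (by omega)
    obtain ⟨-, -, -, hm, hr⟩ := (append_singleton_mem_cSet_iff hz).1 h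
    have hinv : ¬HasInversionAbove z s :=
      fun h => hinv (hasInversionAbove_append_singleton.2 (Or.inl h))
    have hsr' := last_le_of_mem_cSet hz
    by_cases hlt : s' < r
    · rw [if_pos hlt] at hm
      obtain rfl : m - 1 = m' := by omega
      by_cases hs : s' ≤ s
      · exact Or.inl (Or.inr ⟨s', by omega, r', ⟨hsr', by omega⟩, hz⟩)
      · obtain rfl := eq_of_mem_cSet_of_not_hasInversionAbove hz hinv (by omega)
        exact Or.inr ⟨r', ⟨by omega, hlt⟩, hz, hinv⟩
    · rw [if_neg hlt] at hm
      obtain ⟨rfl, rfl, rfl⟩ : m = m' ∧ r = r' ∧ r = s' := by omega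
      exact Or.inl (Or.inl ⟨hz, hinv⟩)
  · rintro ((⟨hz, hinv⟩ | ⟨i, hi, j, ⟨hij, hjr⟩, hz⟩) | ⟨j, ⟨hsj, hjr⟩, hz, hinv⟩)
    · exact ⟨(append_singleton_mem_cSet_iff hz).2 ⟨rfl, by omega,
        not_hasInversionAbove_of_mem_cSet hz le_rfl, by simp, by omega⟩,
        not_hasInversionAbove_append_of_mem_cSet hz le_rfl hinv⟩
    · exact ⟨(append_singleton_mem_cSet_iff hz).2 ⟨rfl, by omega,
        not_hasInversionAbove_of_mem_cSet hz (by omega), by rw [if_pos (by omega)]; omega,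
        by omega⟩, not_hasInversionAbove_append_of_mem_cSet hz hjr
          (not_hasInversionAbove_of_mem_cSet hz (by omega))⟩
    · exact ⟨(append_singleton_mem_cSet_iff hz).2 ⟨rfl, by omega,
        not_hasInversionAbove_of_mem_cSet hz hjr.le, by rw [if_pos hjr]; omega, by omega⟩,
        not_hasInversionAbove_append_of_mem_cSet hz hjr.le hinv⟩

theorem ncard_cSet_succ (hsr : s < r) (hrm : r ≤ m) :
    (cSet (n + 1) m r s).ncard = (cSet n m r s).ncard +
      ∑ i ∈ Finset.range s, (cSet n (m - 1) r i).ncard + (eSet n m r s).ncard := by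
  rw [← ncard_preimage_append_singleton fun x hx => (mem_cSet.1 hx).2.2.2.2.2,
    preimage_append_singleton_cSet hsr hrm, Set.ncard_union_eq, Set.ncard_union_eq,
    ncard_biUnion_finset]
  · exact fun i _ j _ hij => disjoint_cSet (Or.inr hij)
  · refine Set.disjoint_iUnion₂_right.2 fun i hi => disjoint_cSet (Or.inr ?_)
    simp only [Finset.mem_range] at hi
    omega
  · refine Set.disjoint_union_left.2 ⟨(disjoint_cSet (Or.inr ?_)).mono_right eSet_subset_cSet,
      Set.disjoint_iUnion₂_left.2 fun i hi =>
        (disjoint_cSet (Or.inr ?_)).mono_right eSet_subset_cSet⟩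
    · omega
    · simp only [Finset.mem_range] at hi
      omega

theorem ncard_eSet_succ (hsr : s < r) (hrm : r ≤ m) :
    (eSet (n + 1) m r s).ncard = (eSet n m r s).ncard +
      ∑ i ∈ Finset.range (s + 1), ∑ j ∈ Finset.Icc i r, (cSet n (m - 1) j i).ncard +
      ∑ j ∈ Finset.Ioo s r, (eSet n (m - 1) j s).ncard := by
  rw [← ncard_preimage_append_singleton fun x hx => (mem_cSet.1 hx.1).2.2.2.2.2,
    preimage_append_singleton_eSet hsr hrm, Set.ncard_union_eq, Set.ncard_union_eq,
    ncard_biUnion_finset (Finset.range (s + 1)), ncard_biUnion_finset (Finset.Ioo s r)]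
  · simp only [fun i => ncard_biUnion_finset (Finset.Icc i r) fun j _ j' _ hjj' =>
      disjoint_cSet (n := n) (m := m - 1) (s := i) (Or.inl hjj')]
  · exact fun j _ j' _ hjj' => (disjoint_cSet (Or.inl hjj')).mono eSet_subset_cSet eSet_subset_cSet
  · exact fun i _ i' _ hii' => Set.disjoint_iUnion₂_left.2 fun j _ =>
      Set.disjoint_iUnion₂_right.2 fun j' _ => disjoint_cSet (Or.inr hii')
  · refine Set.disjoint_iUnion₂_right.2 fun i hi => Set.disjoint_iUnion₂_right.2 fun j _ =>
      (disjoint_cSet (Or.inr ?_)).mono_left eSet_subset_cSet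
    simp only [Finset.mem_range] at hi
    omega
  · refine Set.disjoint_union_left.2 ⟨Set.disjoint_iUnion₂_right.2 fun j hj =>
      (disjoint_cSet (Or.inl ?_)).mono eSet_subset_cSet eSet_subset_cSet,
      Set.disjoint_iUnion₂_left.2 fun i hi => Set.disjoint_iUnion₂_left.2 fun j' _ =>
        Set.disjoint_iUnion₂_right.2 fun j hj =>
          (disjoint_cSet (Or.inr ?_)).mono_right eSet_subset_cSet⟩
    · simp only [Finset.mem_Ioo] at hj
      omega
    · simp only [Finset.mem_range, Finset.mem_Ioo] at hi hj
      omega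

end cSet

theorem one_sub_X_mul_eq_X_mul {R : Type*} [CommRing R] {A B : PowerSeries R}
    (h0 : coeff 0 A = 0) (h : ∀ n, coeff (n + 1) A = coeff n A + coeff n B) :
    (1 - X) * A = X * B := by
  ext n
  rcases n with _ | n
  · simpa [sub_mul] using h0
  · simp [sub_mul, coeff_succ_X_mul, h]

theorem sum_eq_sum_natCast_of_mem_iff {M : Type*} [AddCommMonoid M] {u : Finset ℤ}
    {t : Finset ℕ} (h : ∀ z, z ∈ u ↔ 0 ≤ z ∧ z.toNat ∈ t) (g : ℤ → M) :
    ∑ z ∈ u, g z = ∑ k ∈ t, g k := by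
  refine Finset.sum_nbij' Int.toNat (↑) (fun z hz => ((h z).1 hz).2)
    (fun k hk => (h k).2 ⟨by simp, by simpa⟩) (fun z hz => Int.toNat_of_nonneg ((h z).1 hz).1)
    (fun k _ => Int.toNat_natCast k) fun z hz => by rw [Int.toNat_of_nonneg ((h z).1 hz).1]

theorem sum_Icc_natCast {M : Type*} [AddCommMonoid M] (a b : ℕ) (g : ℤ → M) :
    ∑ z ∈ Finset.Icc (a : ℤ) b, g z = ∑ k ∈ Finset.Icc a b, g k :=
  sum_eq_sum_natCast_of_mem_iff (fun _ => by simp only [Finset.mem_Icc]; omega) g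

noncomputable def eGF (m r s : ℤ) : PowerSeries ℚ :=
  if 0 ≤ m ∧ 0 ≤ r ∧ 0 ≤ s then
    PowerSeries.mk (fun n => ((eSet n m.toNat r.toNat s.toNat).ncard : ℚ))
  else 0

theorem coeff_fGF_natCast (n m r s : ℕ) : coeff n (fGF m r s) = (cSet n m r s).ncard := by
  simp [fGF, cA, cSet]

theorem coeff_eGF_natCast (n m r s : ℕ) : coeff n (eGF m r s) = (eSet n m r s).ncard := by
  simp [eGF]

theorem one_sub_X_mul_fGF (m r s : ℤ) (hs : 0 ≤ s) (hsr : s < r) (hrm : r ≤ m) :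
    (1 - X) * fGF m r s = X * (∑ i ∈ Finset.Icc 0 (s - 1), fGF (m - 1) r i + eGF m r s) := by
  lift s to ℕ using hs
  lift r to ℕ using by omega
  lift m to ℕ using by omega
  rw [show (m : ℤ) - 1 = (m - 1 : ℕ) by omega, sum_eq_sum_natCast_of_mem_iff
    (t := Finset.range s) (fun _ => by simp only [Finset.mem_Icc, Finset.mem_range]; omega)]
  refine one_sub_X_mul_eq_X_mul (by simp [coeff_fGF_natCast, cSet_zero]) fun n => ?_
  simp only [map_add, map_sum, coeff_fGF_natCast, coeff_eGF_natCast]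
  rw [ncard_cSet_succ (by omega) (by omega)]
  push_cast
  ring

theorem one_sub_X_mul_eGF (m r s : ℤ) (hs : 0 ≤ s) (hsr : s < r) (hrm : r ≤ m) :
    (1 - X) * eGF m r s = X * (∑ i ∈ Finset.Icc 0 s, ∑ j ∈ Finset.Icc i r, fGF (m - 1) j i +
      ∑ j ∈ Finset.Icc (s + 1) (r - 1), eGF (m - 1) j s) := by
  lift s to ℕ using hs
  lift r to ℕ using by omega
  lift m to ℕ using by omega
  rw [show (m : ℤ) - 1 = (m - 1 : ℕ) by omega,
    sum_eq_sum_natCast_of_mem_iff (t := Finset.range (s + 1))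
      (fun _ => by simp only [Finset.mem_Icc, Finset.mem_range]; omega),
    sum_eq_sum_natCast_of_mem_iff (t := Finset.Ioo s r)
      (fun _ => by simp only [Finset.mem_Icc, Finset.mem_Ioo]; omega)]
  simp only [sum_Icc_natCast]
  refine one_sub_X_mul_eq_X_mul (by simp [coeff_eGF_natCast, eSet, cSet_zero]) fun n => ?_
  simp only [map_add, map_sum, coeff_fGF_natCast, coeff_eGF_natCast]
  rw [ncard_eSet_succ (by omega) (by omega)]
  push_cast
  ring

theorem fGF_recurrence_general (m r s : ℤ) (hs : 0 ≤ s) (hsr : s < r)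
    (hrm : r ≤ m) :
    (1 - X) ^ 2 * fGF m r s
      = X * (1 - X) * (∑ i ∈ Finset.Icc 0 (s - 1), fGF (m - 1) r i)
        + X * (1 - X) * (∑ j ∈ Finset.Icc (s + 1) (r - 1), fGF (m - 1) j s)
        + X ^ 2 * (∑ i ∈ Finset.Icc 0 s, ∑ j ∈ Finset.Icc i r, fGF (m - 1) j i)
        - X ^ 2 * (∑ j ∈ Finset.Icc (s + 1) (r - 1), ∑ i ∈ Finset.Icc 0 (s - 1),
            fGF (m - 2) j i) := by
  have hE : ∀ j ∈ Finset.Icc (s + 1) (r - 1), X * eGF (m - 1) j s =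
      (1 - X) * fGF (m - 1) j s - X * ∑ i ∈ Finset.Icc 0 (s - 1), fGF (m - 2) j i := by
    intro j hj
    rw [Finset.mem_Icc] at hj
    rw [show m - 2 = m - 1 - 1 by ring, one_sub_X_mul_fGF (m - 1) j s hs (by omega) (by omega)]
    ring
  have hEsum := Finset.sum_congr rfl hE
  rw [← Finset.mul_sum, Finset.sum_sub_distrib, ← Finset.mul_sum, ← Finset.mul_sum] at hEsum
  linear_combination (1 - X) * one_sub_X_mul_fGF m r s hs hsr hrm +
    X * one_sub_X_mul_eGF m r s hs hsr hrm + X * hEsum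

/-- The recurrence of Proposition 1 for `f_{m,r,s}` with `m ≥ 1` and
`0 ≤ s < r ≤ m`, multiplied through by `(1-x)²`. -/
theorem fGF_recurrence (m r s : ℤ) (hm : 1 ≤ m) (hs : 0 ≤ s) (hsr : s < r)
    (hrm : r ≤ m) :
    (1 - X) ^ 2 * fGF m r s
      = X * (1 - X) * (∑ i ∈ Finset.Icc 0 (s - 1), fGF (m - 1) r i)
        + X * (1 - X) * (∑ j ∈ Finset.Icc (s + 1) (r - 1), fGF (m - 1) j s)
        + X ^ 2 * (∑ i ∈ Finset.Icc 0 s, ∑ j ∈ Finset.Icc i r, fGF (m - 1) j i)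
        - X ^ 2 * (∑ j ∈ Finset.Icc (s + 1) (r - 1), ∑ i ∈ Finset.Icc 0 (s - 1),
            fGF (m - 2) j i) :=
  fGF_recurrence_general m r s hs hsr hrm
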